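/- Let a, b ∈ ℂ with a+b ≠ 0, and let Γ_J(a), Γ_J(b) be lower Jordan blocks of sizes N_1, N_2 respectively. Then the N_1×N_2 matrix G with entries G_{ij} = C(i+j-2, i-1)·(-1)^{i+j}/(a+b)^{i+j-1} satisfies G Γ_J(b)^T + Γ_J(a) G = e_1 e_1^T, where e_1 denotes the first standard basis vector (of appropriate length) and C(n,k) is the binomial coefficient. -/

import Mathlib

open Matrix

/-!
Left multiplication by `Γ_J(a)` is `a` times the identity plus the shift moving every row one step
down, and right multiplication by `Γ_J(b)ᵀ` does the same to the columns. With 0-based indices and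
`G_{nm} = C(n+m, n) (-1)^{n+m} / (a+b)^{n+m+1}`, the equation therefore reads entrywise
`(a+b) G_{nm} + G_{n-1,m} + G_{n,m-1} = δ_{n0} δ_{m0}`, which after clearing signs and powers of
`a+b` is Pascal's rule `C(n+m+2, n+1) = C(n+m+1, n) + C(n+m+1, n+1)`.
-/

/-- The N×N lower Jordan block with `a` on the diagonal and 1 on the subdiagonal. -/
def jordanBlock (N : ℕ) (a : ℂ) : Matrix (Fin N) (Fin N) ℂ :=
  Matrix.of fun i j => if (i : ℕ) = j then a else if (i : ℕ) = (j : ℕ) + 1 then 1 else 0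

theorem Fin.sum_ite_val_eq_val_add_one {N : ℕ} {α : Type*} [AddCommMonoid α] (g : ℕ → α)
    (i : Fin N) :
    (∑ k : Fin N, if (i : ℕ) = k + 1 then g k else 0) = if (i : ℕ) = 0 then 0 else g (i - 1) := by
  split_ifs with hi
  · exact Finset.sum_eq_zero fun k _ => if_neg (by omega)
  · rw [Finset.sum_eq_single ⟨i - 1, by omega⟩
      (fun k _ hk => if_neg fun h => hk (Fin.ext (by dsimp only; omega))) (by simp)]
    simp only [if_pos (show (i : ℕ) = i - 1 + 1 by omega)]

section JordanBlock

variable {N : ℕ} {n m : Type*}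

theorem jordanBlock_mul_of_apply (a : ℂ) (f : ℕ → n → ℂ) (i : Fin N) (j : n) :
    (jordanBlock N a * of fun (k : Fin N) j => f k j) i j
      = a * f i j + if (i : ℕ) = 0 then 0 else f (i - 1) j := by
  have hentry : ∀ k : Fin N, jordanBlock N a i k * f k j
      = (if i = k then a * f k j else 0) + if (i : ℕ) = k + 1 then f k j else 0 := by
    intro k
    rcases eq_or_ne i k with rfl | hik
    · simp [jordanBlock]
    · simp only [jordanBlock, of_apply, hik, Fin.val_ne_of_ne hik, if_false, zero_add]
      split_ifs <;> ring
  simp only [mul_apply, of_apply, hentry, Finset.sum_add_distrib, Finset.sum_ite_eq,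
    Finset.mem_univ, if_true]
  rw [Fin.sum_ite_val_eq_val_add_one (fun k => f k j)]

theorem of_mul_jordanBlock_transpose_apply (b : ℂ) (f : m → ℕ → ℂ) (i : m) (j : Fin N) :
    ((of fun i (k : Fin N) => f i k) * (jordanBlock N b)ᵀ) i j
      = f i j * b + if (j : ℕ) = 0 then 0 else f i (j - 1) := by
  rw [← transpose_apply (_ * _) j i, transpose_mul, transpose_transpose, mul_comm (f i j)]
  exact jordanBlock_mul_of_apply b (fun k i => f i k) j i

end JordanBlock

noncomputable def cauchyCoeff {K : Type*} [Field K] (c : K) (n m : ℕ) : K :=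
  ((n + m).choose n : K) * (-1) ^ (n + m) / c ^ (n + m + 1)

section CauchyCoeff

variable {K : Type*} [Field K] {c : K}

theorem mul_cauchyCoeff_zero_zero (hc : c ≠ 0) : c * cauchyCoeff c 0 0 = 1 := by
  simp [cauchyCoeff, hc]

theorem mul_cauchyCoeff_zero_succ (hc : c ≠ 0) (m : ℕ) :
    c * cauchyCoeff c 0 (m + 1) = -cauchyCoeff c 0 m := by
  simp only [cauchyCoeff, zero_add, Nat.choose_zero_right]
  field_simp
  ring

theorem mul_cauchyCoeff_succ_zero (hc : c ≠ 0) (n : ℕ) :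
    c * cauchyCoeff c (n + 1) 0 = -cauchyCoeff c n 0 := by
  simp only [cauchyCoeff, add_zero, Nat.choose_self]
  field_simp
  ring

theorem mul_cauchyCoeff_succ_succ (hc : c ≠ 0) (n m : ℕ) :
    c * cauchyCoeff c (n + 1) (m + 1) = -(cauchyCoeff c n (m + 1) + cauchyCoeff c (n + 1) m) := by
  have pascal : ((n + 1 + (m + 1)).choose (n + 1) : K)
      = (n + (m + 1)).choose n + (n + 1 + m).choose (n + 1) := by
    rw [show n + 1 + (m + 1) = n + m + 1 + 1 by omega, show n + (m + 1) = n + m + 1 by omega,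
      show n + 1 + m = n + m + 1 by omega, Nat.choose_succ_succ', Nat.cast_add]
  simp only [cauchyCoeff, pascal]
  field_simp
  ring

theorem cauchyCoeff_recurrence (hc : c ≠ 0) (n m : ℕ) :
    c * cauchyCoeff c n m + (if n = 0 then 0 else cauchyCoeff c (n - 1) m)
      + (if m = 0 then 0 else cauchyCoeff c n (m - 1)) = if n = 0 ∧ m = 0 then 1 else 0 := by
  rcases n with _ | n <;> rcases m with _ | m
  · simp [mul_cauchyCoeff_zero_zero hc]
  · simp [mul_cauchyCoeff_zero_succ hc]
  · simp [mul_cauchyCoeff_succ_zero hc]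
  · simp [mul_cauchyCoeff_succ_succ hc]

end CauchyCoeff

/-- The N₁×N₂ matrix with entries G_{ij} = C(i+j-2, i-1)·(-1)^{i+j}/(a+b)^{i+j-1}
(1-based indices) satisfies G Γ_J(b)ᵀ + Γ_J(a) G = e₁ e₁ᵀ. -/
theorem cauchy_elementary_jordan_jordan (N₁ N₂ : ℕ) (a b : ℂ) (hab : a + b ≠ 0) :
    let G : Matrix (Fin N₁) (Fin N₂) ℂ :=
      Matrix.of fun i j =>
        (Nat.choose ((i : ℕ) + (j : ℕ)) (i : ℕ) : ℂ) * (-1) ^ ((i : ℕ) + (j : ℕ))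
          / (a + b) ^ ((i : ℕ) + (j : ℕ) + 1)
    G * (jordanBlock N₂ b)ᵀ + jordanBlock N₁ a * G
      = Matrix.of fun (i : Fin N₁) (j : Fin N₂) =>
          if (i : ℕ) = 0 ∧ (j : ℕ) = 0 then (1 : ℂ) else 0 := by
  intro G
  have hG : G = of fun (i : Fin N₁) (j : Fin N₂) => cauchyCoeff (a + b) i j := rfl
  ext i j
  rw [Matrix.add_apply, hG,
    of_mul_jordanBlock_transpose_apply b (fun (i : Fin N₁) k => cauchyCoeff (a + b) i k),
    jordanBlock_mul_of_apply a (fun k (j : Fin N₂) => cauchyCoeff (a + b) k j), of_apply,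
    ← cauchyCoeff_recurrence hab]
  ring
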